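/- arXiv:1909.01586 — 8 statements merged into one kernel-verified Lean document; each statement's English description precedes it below -/
import Mathlib

section
/- Let (Ω, 𝓕, P) be a probability space with a measurable measure-preserving flow (θ_t)_{t∈ℝ}, (X, d) a Polish space, and Φ : ℝ × Ω × X → X a measurable random dynamical system over θ satisfying d(Φ(t,ω)x, Φ(t,ω)y) ≤ C·d(x,y) for all t ∈ ℝ, ω ∈ Ω, x, y ∈ X and some constant C > 0. Let Y₀ : Ω → X be measurable and suppose that for every ε > 0 there exists a relatively dense set E ⊆ ℝ such that for every τ ∈ E and P-almost all ω, d(Y₀(ω), Φ(τ, θ_{-τ}ω)Y₀(θ_{-τ}ω)) < ε. Then H(t,ω) := Φ(t,ω)Y₀(ω) is a random almost periodic solution of Φ: for all t, s ∈ ℝ and all ω, Φ(t, θ_s ω)H(s,ω) = H(t+s, ω), and for every ε > 0 there exists a relatively dense set E ⊆ ℝ such that for every τ ∈ E, every s ∈ ℝ and P-almost all ω, d(H(s+τ, ω), H(s, θ_τ ω)) ≤ C·ε. -/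
open MeasureTheory

/-- A set `E ⊆ ℝ` is relatively dense if there is `l > 0` such that every interval
`[a, a + l]` contains a point of `E`. -/
def RelativelyDense (E : Set ℝ) : Prop :=
  ∃ l > (0 : ℝ), ∀ a : ℝ, ∃ τ ∈ E, τ ∈ Set.Icc a (a + l)

theorem existence_of_random_almost_periodic_solution
    {Ω : Type*} [MeasurableSpace Ω] (P : Measure Ω) [IsProbabilityMeasure P]
    (θ : ℝ → Ω → Ω)
    (hθ0 : θ 0 = id)
    (hθadd : ∀ t s : ℝ, θ (t + s) = θ t ∘ θ s)
    (hθmeas : ∀ t : ℝ, Measurable (θ t))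
    (hθpres : ∀ t : ℝ, MeasurePreserving (θ t) P P)
    {X : Type*} [MetricSpace X] [PolishSpace X] [MeasurableSpace X] [BorelSpace X]
    (Φ : ℝ → Ω → X → X)
    (hΦmeas : Measurable fun p : ℝ × Ω × X => Φ p.1 p.2.1 p.2.2)
    (hΦ0 : ∀ ω : Ω, Φ 0 ω = id)
    (hΦcoc : ∀ (t s : ℝ) (ω : Ω) (x : X), Φ (t + s) ω x = Φ t (θ s ω) (Φ s ω x))
    (C : ℝ) (hC : 0 < C)
    (hLip : ∀ (t : ℝ) (ω : Ω) (x y : X), dist (Φ t ω x) (Φ t ω y) ≤ C * dist x y)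
    (Y₀ : Ω → X) (hY₀ : Measurable Y₀)
    (hAP : ∀ ε > (0 : ℝ), ∃ E : Set ℝ, RelativelyDense E ∧
      ∀ τ ∈ E, ∀ᵐ ω ∂P, dist (Y₀ ω) (Φ τ (θ (-τ) ω) (Y₀ (θ (-τ) ω))) < ε)
    -- `H t ω := Φ t ω (Y₀ ω)`
    (H : ℝ → Ω → X) (hH : ∀ (t : ℝ) (ω : Ω), H t ω = Φ t ω (Y₀ ω)) :
    (∀ (t s : ℝ) (ω : Ω), Φ t (θ s ω) (H s ω) = H (t + s) ω) ∧
    (∀ ε > (0 : ℝ), ∃ E : Set ℝ, RelativelyDense E ∧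
      ∀ τ ∈ E, ∀ s : ℝ, ∀ᵐ ω ∂P,
        dist (H (s + τ) ω) (H s (θ τ ω)) ≤ C * ε) := by
  constructor
  · intro t s ω
    rw [hH, hH, hΦcoc]
  · intro ε hε
    obtain ⟨E, hE, hEτ⟩ := hAP ε hε
    refine ⟨E, hE, fun τ hτ s => ?_⟩
    have h1 : ∀ᵐ ω ∂P, dist (Y₀ (θ τ ω)) (Φ τ ω (Y₀ ω)) < ε := by
      have := (hθpres τ).quasiMeasurePreserving.ae (hEτ τ hτ)
      filter_upwards [this] with ω hω
      have hid : θ (-τ) (θ τ ω) = ω := by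
        have : θ (-τ + τ) = θ (-τ) ∘ θ τ := hθadd (-τ) τ
        simp at this
        calc θ (-τ) (θ τ ω) = (θ (-τ) ∘ θ τ) ω := rfl
          _ = θ 0 ω := by rw [← this]
          _ = ω := by rw [hθ0]; rfl
      simpa [hid] using hω
    filter_upwards [h1] with ω hω
    have hcoc : H (s + τ) ω = Φ s (θ τ ω) (Φ τ ω (Y₀ ω)) := by
      rw [hH, ← hΦcoc]
    rw [hcoc, hH]
    calc dist (Φ s (θ τ ω) (Φ τ ω (Y₀ ω))) (Φ s (θ τ ω) (Y₀ (θ τ ω)))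
        ≤ C * dist (Φ τ ω (Y₀ ω)) (Y₀ (θ τ ω)) := hLip s (θ τ ω) _ _
      _ ≤ C * ε := by
          apply mul_le_mul_of_nonneg_left _ hC.le
          rw [dist_comm]; exact hω.le
end

section
/- Let (Ω, 𝓕, P) be a probability space with a measurable measure-preserving flow (θ_t)_{t∈ℝ}. Let T² = (ℝ/ℤ)² be the 2-torus with a translation-invariant metric d_T, let f : ℝ × T² → T² be a flow (f_0 = id, f_{t+s} = f_t ∘ f_s) such that each f_t is an isometry of d_T, and let g : ℝ × Ω × ℝ^d → ℝ^d be a measurable cocycle over θ (g(0,ω,·) = id and g(t+s,ω,z) = g(t, θ_s ω, g(s,ω,z)) for all s, t, ω, z). Equip T² × ℝ^d with the metric D((p,z),(p',z')) = sqrt(d_T(p,p')² + ‖z - z'‖²) and define Φ(t,ω)(p,z) := (f_t(p), g(t,ω,z)), a measurable random dynamical system over θ. Fix (p₀, z₀) ∈ T² × ℝ^d and suppose that for every ε > 0 there exists a relatively dense set E ⊆ ℝ such that for every τ ∈ E: d_T(f_τ(p₀), p₀) < ε/√2, and for P-almost all ω, ‖g(t+τ, ω, z) − g(t, θ_τ ω,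 z)‖ < ε/√2 for all t ∈ ℝ and z ∈ ℝ^d. Then H(s,ω) := Φ(s,ω)(p₀, z₀) is a random almost periodic solution of Φ: Φ(t, θ_s ω)H(s,ω) = H(t+s, ω) for all t, s, ω, and for every ε > 0 there is a relatively dense set E such that for all τ ∈ E, all t ∈ ℝ and P-almost all ω, D(H(t+τ, ω), H(t, θ_τ ω)) < ε. -/
open MeasureTheory

theorem random_almost_periodic_solution_on_torus_times_Rd
    {Ω : Type*} [MeasurableSpace Ω] (P : Measure Ω) [IsProbabilityMeasure P]
    (θ : ℝ → Ω → Ω)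
    (hθ0 : θ 0 = id)
    (hθadd : ∀ t s : ℝ, θ (t + s) = θ t ∘ θ s)
    (hθmeas : ∀ t : ℝ, Measurable (θ t))
    (hθpres : ∀ t : ℝ, MeasurePreserving (θ t) P P)
    -- the 2-torus `T² = (ℝ/ℤ)²` with a translation-invariant metric `dT`
    (dT : (AddCircle (1:ℝ) × AddCircle (1:ℝ)) → (AddCircle (1:ℝ) × AddCircle (1:ℝ)) → ℝ)
    (hdT_self : ∀ p, dT p p = 0)
    (hdT_pos : ∀ p q, p ≠ q → 0 < dT p q)
    (hdT_symm : ∀ p q, dT p q = dT q p)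
    (hdT_triangle : ∀ p q r, dT p r ≤ dT p q + dT q r)
    (hdT_inv : ∀ v p q, dT (p + v) (q + v) = dT p q)
    -- a flow `f` on the torus, each `f t` an isometry of `dT`
    (f : ℝ → (AddCircle (1:ℝ) × AddCircle (1:ℝ)) → (AddCircle (1:ℝ) × AddCircle (1:ℝ)))
    (hf0 : f 0 = id)
    (hfadd : ∀ t s : ℝ, f (t + s) = f t ∘ f s)
    (hfiso : ∀ (t : ℝ) p q, dT (f t p) (f t q) = dT p q)
    -- a measurable cocycle `g` on `ℝ^d` over `θ`
    {d : ℕ}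
    (g : ℝ → Ω → EuclideanSpace ℝ (Fin d) → EuclideanSpace ℝ (Fin d))
    (hgmeas : Measurable fun p : ℝ × Ω × EuclideanSpace ℝ (Fin d) => g p.1 p.2.1 p.2.2)
    (hg0 : ∀ ω, g 0 ω = id)
    (hgcoc : ∀ (t s : ℝ) (ω : Ω) (z : EuclideanSpace ℝ (Fin d)),
      g (t + s) ω z = g t (θ s ω) (g s ω z))
    -- the metric `D` on `T² × ℝ^d`
    (D : ((AddCircle (1:ℝ) × AddCircle (1:ℝ)) × EuclideanSpace ℝ (Fin d)) →
         ((AddCircle (1:ℝ) × AddCircle (1:ℝ)) × EuclideanSpace ℝ (Fin d)) → ℝ)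
    (hD : ∀ p p' z z', D (p, z) (p', z') = Real.sqrt (dT p p' ^ 2 + ‖z - z'‖ ^ 2))
    -- the product random dynamical system `Φ`
    (Φ : ℝ → Ω → ((AddCircle (1:ℝ) × AddCircle (1:ℝ)) × EuclideanSpace ℝ (Fin d)) →
         ((AddCircle (1:ℝ) × AddCircle (1:ℝ)) × EuclideanSpace ℝ (Fin d)))
    (hΦ : ∀ (t : ℝ) (ω : Ω) p z, Φ t ω (p, z) = (f t p, g t ω z))
    -- a fixed initial point
    (p₀ : AddCircle (1:ℝ) × AddCircle (1:ℝ)) (z₀ : EuclideanSpace ℝ (Fin d))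
    -- almost periodicity assumptions
    (hAP : ∀ ε > (0 : ℝ), ∃ E : Set ℝ, RelativelyDense E ∧
      ∀ τ ∈ E, dT (f τ p₀) p₀ < ε / Real.sqrt 2 ∧
        (∀ᵐ ω ∂P, ∀ (t : ℝ) (z : EuclideanSpace ℝ (Fin d)),
          ‖g (t + τ) ω z - g t (θ τ ω) z‖ < ε / Real.sqrt 2))
    -- `H s ω := Φ s ω (p₀, z₀)`
    (H : ℝ → Ω → ((AddCircle (1:ℝ) × AddCircle (1:ℝ)) × EuclideanSpace ℝ (Fin d)))
    (hH : ∀ (s : ℝ) (ω : Ω), H s ω = Φ s ω (p₀, z₀)) :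
    (∀ (t s : ℝ) (ω : Ω), Φ t (θ s ω) (H s ω) = H (t + s) ω) ∧
    (∀ ε > (0 : ℝ), ∃ E : Set ℝ, RelativelyDense E ∧
      ∀ τ ∈ E, ∀ t : ℝ, ∀ᵐ ω ∂P, D (H (t + τ) ω) (H t (θ τ ω)) < ε) := by
  constructor
  · intro t s ω
    rw [hH, hH, hΦ, hΦ, hΦ, hfadd, hgcoc]
    rfl
  · intro ε hε
    obtain ⟨E, hE, hEτ⟩ := hAP ε hε
    refine ⟨E, hE, fun τ hτ t => ?_⟩
    obtain ⟨h1, h2⟩ := hEτ τ hτ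
    filter_upwards [h2] with ω h2ω
    rw [hH, hH, hΦ, hΦ, hD]
    have hdnn : 0 ≤ dT (f (t + τ) p₀) (f t p₀) := by
      have := hdT_triangle (f (t + τ) p₀) (f t p₀) (f (t + τ) p₀)
      rw [hdT_self, hdT_symm (f t p₀)] at this
      linarith
    have hdlt : dT (f (t + τ) p₀) (f t p₀) < ε / Real.sqrt 2 := by
      have : f (t + τ) p₀ = f t (f τ p₀) := by rw [hfadd]; rfl
      rw [this, hfiso]; exact h1
    have hglt : ‖g (t + τ) ω z₀ - g t (θ τ ω) z₀‖ < ε / Real.sqrt 2 := h2ω t z₀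
    have hεs : (0:ℝ) < ε / Real.sqrt 2 := by positivity
    have key : dT (f (t + τ) p₀) (f t p₀) ^ 2 + ‖g (t + τ) ω z₀ - g t (θ τ ω) z₀‖ ^ 2
        < ε ^ 2 := by
      have ha : dT (f (t + τ) p₀) (f t p₀) ^ 2 < (ε / Real.sqrt 2) ^ 2 := by
        apply sq_lt_sq' _ hdlt; linarith
      have hb : ‖g (t + τ) ω z₀ - g t (θ τ ω) z₀‖ ^ 2 < (ε / Real.sqrt 2) ^ 2 := by
        apply sq_lt_sq' _ hglt
        have := norm_nonneg (g (t + τ) ω z₀ - g t (θ τ ω) z₀); linarith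
      have h2' : (ε / Real.sqrt 2) ^ 2 = ε ^ 2 / 2 := by
        rw [div_pow, Real.sq_sqrt (by norm_num : (0:ℝ) ≤ 2)]
      rw [h2'] at ha hb
      linarith
    calc Real.sqrt (dT (f (t + τ) p₀) (f t p₀) ^ 2 + ‖g (t + τ) ω z₀ - g t (θ τ ω) z₀‖ ^ 2)
        < Real.sqrt (ε ^ 2) := by
          apply Real.sqrt_lt_sqrt (by positivity) key
      _ = ε := Real.sqrt_sq hε.le
end

section
/- Let Φ : ℝ × Ω × X → X be a measurable random dynamical system over a measurable measure-preserving flow θ on a probability space (Ω, 𝓕, P), on a Polish space (X, d), and let H : ℝ × Ω → X be measurable such that for all t, s ∈ ℝ and P-almost all ω, Φ(t, θ_s ω)H(s, ω) = H(t+s, ω). For t ∈ ℝ define the probability measure μ_t on Ω × X (with the product σ-algebra 𝓕 ⊗ 𝓑(X)) as the pushforward of P under ω ↦ (θ_t ω, H(t, ω)), and define the skew product Θ_t : Ω × X → Ω × X by Θ_t(ω, x) = (θ_t ω, Φ(t, ω)x). Then for all t, s ∈ ℝ, the pushforward of μ_s under Θ_t equals μ_{t+s}. -/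
open MeasureTheory

theorem skew_product_pushforward_of_measures
    {Ω : Type*} [MeasurableSpace Ω] (P : Measure Ω) [IsProbabilityMeasure P]
    (θ : ℝ → Ω → Ω)
    (hθ0 : θ 0 = id)
    (hθadd : ∀ t s : ℝ, θ (t + s) = θ t ∘ θ s)
    (hθmeas : ∀ t : ℝ, Measurable (θ t))
    (hθpres : ∀ t : ℝ, MeasurePreserving (θ t) P P)
    {X : Type*} [MetricSpace X] [PolishSpace X] [MeasurableSpace X] [BorelSpace X]
    (Φ : ℝ → Ω → X → X)
    (hΦmeas : Measurable fun p : ℝ × Ω × X => Φ p.1 p.2.1 p.2.2)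
    (hΦ0 : ∀ ω : Ω, Φ 0 ω = id)
    (hΦcoc : ∀ (t s : ℝ) (ω : Ω) (x : X), Φ (t + s) ω x = Φ t (θ s ω) (Φ s ω x))
    (H : ℝ → Ω → X) (hHmeas : Measurable fun p : ℝ × Ω => H p.1 p.2)
    (hHsol : ∀ t s : ℝ, ∀ᵐ ω ∂P, Φ t (θ s ω) (H s ω) = H (t + s) ω)
    -- `μ t` is the pushforward of `P` under `ω ↦ (θ t ω, H t ω)`
    (μ : ℝ → Measure (Ω × X))
    (hμ : ∀ t : ℝ, μ t = Measure.map (fun ω => (θ t ω, H t ω)) P)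
    -- the skew product `Θ t (ω, x) = (θ t ω, Φ t ω x)`
    (Θ : ℝ → Ω × X → Ω × X)
    (hΘ : ∀ (t : ℝ) (ω : Ω) (x : X), Θ t (ω, x) = (θ t ω, Φ t ω x)) :
    ∀ t s : ℝ, Measure.map (Θ t) (μ s) = μ (t + s) := by
  intro t s
  have hΦt : Measurable fun p : Ω × X => Φ t p.1 p.2 :=
    hΦmeas.comp (measurable_const.prodMk measurable_id)
  have hHt : ∀ r : ℝ, Measurable fun ω => H r ω := fun r =>
    hHmeas.comp (measurable_const.prodMk measurable_id)
  have hΘt : Measurable (Θ t) := by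
    have : Θ t = fun p : Ω × X => (θ t p.1, Φ t p.1 p.2) := by
      funext p; exact hΘ t p.1 p.2
    rw [this]
    exact ((hθmeas t).comp measurable_fst).prodMk hΦt
  have hgs : Measurable fun ω => (θ s ω, H s ω) := (hθmeas s).prodMk (hHt s)
  rw [hμ s, hμ (t + s), Measure.map_map hΘt hgs]
  apply Measure.map_congr
  filter_upwards [hHsol t s] with ω hω
  simp only [Function.comp_apply, hΘ t, hω, hθadd t s, Function.comp_apply]
end

section
/- Let Φ : ℝ × Ω × X → X be a measurable random dynamical system over a measurable measure-preserving flow θ on a probability space (Ω, 𝓕, P), on a Polish space (X, d), and let H : ℝ × Ω → X be a random almost periodic solution of Φ. For t ∈ ℝ let μ_t be the pushforward of P under ω ↦ (θ_t ω, H(t, ω)), and let Θ_t(ω, x) = (θ_t ω, Φ(t, ω)x). Then: (i) for all t, s ∈ ℝ, the pushforward of μ_s under Θ_t equals μ_{t+s}; and (ii) for every C₁ > 0 and every ε > 0 there exists a relatively dense set E ⊆ ℝ such that for every τ ∈ E, every s ∈ ℝ, and every measurable f : Ω × X → ℝ with |f| ≤ 1 and |f(ω,x) − f(ω,y)| ≤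 C₁·d(x,y) for all ω, x, y, one has |∫ f dμ_{s+τ} − ∫ f dμ_s| ≤ C₁·ε. -/
open MeasureTheory

/-- `H : ℝ × Ω → X` is a random almost periodic solution of the random dynamical system
`Φ` over `θ` (with respect to the probability measure `P`). -/
def IsRandomAlmostPeriodicSolution {Ω X : Type*} [MeasurableSpace Ω]
    [MetricSpace X] (P : Measure Ω) (θ : ℝ → Ω → Ω)
    (Φ : ℝ → Ω → X → X) (H : ℝ → Ω → X) : Prop :=
  ∀ ε > (0 : ℝ), ∃ E : Set ℝ, RelativelyDense E ∧
    ∀ (t s : ℝ), ∀ τ ∈ E, ∀ᵐ ω ∂P,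
      Φ t (θ s ω) (H s ω) = H (t + s) ω ∧ dist (H (s + τ) ω) (H s (θ τ ω)) < ε

theorem random_almost_periodic_solution_gives_almost_periodic_measure
    {Ω : Type*} [MeasurableSpace Ω] (P : Measure Ω) [IsProbabilityMeasure P]
    (θ : ℝ → Ω → Ω)
    (hθ0 : θ 0 = id)
    (hθadd : ∀ t s : ℝ, θ (t + s) = θ t ∘ θ s)
    (hθmeas : ∀ t : ℝ, Measurable (θ t))
    (hθpres : ∀ t : ℝ, MeasurePreserving (θ t) P P)
    {X : Type*} [MetricSpace X] [PolishSpace X] [MeasurableSpace X] [BorelSpace X]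
    (Φ : ℝ → Ω → X → X)
    (hΦmeas : Measurable fun p : ℝ × Ω × X => Φ p.1 p.2.1 p.2.2)
    (hΦ0 : ∀ ω : Ω, Φ 0 ω = id)
    (hΦcoc : ∀ (t s : ℝ) (ω : Ω) (x : X), Φ (t + s) ω x = Φ t (θ s ω) (Φ s ω x))
    (H : ℝ → Ω → X) (hHmeas : Measurable fun p : ℝ × Ω => H p.1 p.2)
    (hHap : IsRandomAlmostPeriodicSolution P θ Φ H)
    -- `μ t` is the pushforward of `P` under `ω ↦ (θ t ω, H t ω)`
    (μ : ℝ → Measure (Ω × X))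
    (hμ : ∀ t : ℝ, μ t = Measure.map (fun ω => (θ t ω, H t ω)) P)
    -- the skew product `Θ t (ω, x) = (θ t ω, Φ t ω x)`
    (Θ : ℝ → Ω × X → Ω × X)
    (hΘ : ∀ (t : ℝ) (ω : Ω) (x : X), Θ t (ω, x) = (θ t ω, Φ t ω x)) :
    (∀ t s : ℝ, Measure.map (Θ t) (μ s) = μ (t + s)) ∧
    (∀ C₁ > (0 : ℝ), ∀ ε > (0 : ℝ), ∃ E : Set ℝ, RelativelyDense E ∧
      ∀ τ ∈ E, ∀ s : ℝ, ∀ f : Ω × X → ℝ, Measurable f →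
        (∀ (ω : Ω) (x : X), |f (ω, x)| ≤ 1) →
        (∀ (ω : Ω) (x y : X), |f (ω, x) - f (ω, y)| ≤ C₁ * dist x y) →
        |(∫ p, f p ∂(μ (s + τ))) - ∫ p, f p ∂(μ s)| ≤ C₁ * ε) := by
  have hHs : ∀ s : ℝ, Measurable (fun ω => H s ω) := fun s =>
    hHmeas.comp (measurable_const.prodMk measurable_id)
  have hg : ∀ s : ℝ, Measurable (fun ω => (θ s ω, H s ω)) := fun s =>
    (hθmeas s).prodMk (hHs s)
  have hΦt : ∀ t : ℝ, Measurable (fun q : Ω × X => Φ t q.1 q.2) := fun t =>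
    hΦmeas.comp (measurable_const.prodMk measurable_id)
  have hΘeq : ∀ t : ℝ, Θ t = fun p : Ω × X => (θ t p.1, Φ t p.1 p.2) := by
    intro t; funext p; cases p with
    | mk ω x => exact hΘ t ω x
  have hΘm : ∀ t : ℝ, Measurable (Θ t) := by
    intro t; rw [hΘeq t]
    exact ((hθmeas t).comp measurable_fst).prodMk (hΦt t)
  constructor
  · intro t s
    rw [hμ s, Measure.map_map (hΘm t) (hg s), hμ (t + s)]
    obtain ⟨E, hE, hsol⟩ := hHap 1 one_pos
    obtain ⟨l, _, hEl⟩ := hE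
    obtain ⟨τ, hτE, _⟩ := hEl 0
    refine Measure.map_congr ?_
    filter_upwards [hsol t s τ hτE] with ω hω
    have h1 : Φ t (θ s ω) (H s ω) = H (t + s) ω := hω.1
    have h2 : θ (t + s) ω = θ t (θ s ω) := congrFun (hθadd t s) ω
    simp only [Function.comp_apply, hΘ t (θ s ω) (H s ω), h1, h2]
  · intro C₁ hC₁ ε hε
    obtain ⟨E, hE, hsol⟩ := hHap ε hε
    refine ⟨E, hE, ?_⟩
    intro τ hτ s f hfm hf1 hfl
    set A : Ω → ℝ := fun ω => f (θ (s + τ) ω, H (s + τ) ω) with hA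
    set B : Ω → ℝ := fun ω => f (θ (s + τ) ω, H s (θ τ ω)) with hB
    have hAm : Measurable A := hfm.comp (hg (s + τ))
    have hBm : Measurable B :=
      hfm.comp ((hθmeas (s + τ)).prodMk ((hHs s).comp (hθmeas τ)))
    have hI1 : (∫ p, f p ∂(μ (s + τ))) = ∫ ω, A ω ∂P := by
      rw [hμ (s + τ), integral_map (hg (s + τ)).aemeasurable hfm.aestronglyMeasurable]
    have hI2 : (∫ p, f p ∂(μ s)) = ∫ ω, B ω ∂P := by
      rw [hμ s, integral_map (hg s).aemeasurable hfm.aestronglyMeasurable]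
      have hcomp : Measurable (fun ω => f (θ s ω, H s ω)) := hfm.comp (hg s)
      conv_lhs => rw [← (hθpres τ).map_eq]
      rw [integral_map (hθmeas τ).aemeasurable hcomp.aestronglyMeasurable]
      refine integral_congr_ae (Filter.Eventually.of_forall fun ω => ?_)
      have h2 : θ (s + τ) ω = θ s (θ τ ω) := congrFun (hθadd s τ) ω
      simp only [hB, h2]
    have hIA : Integrable A P := by
      refine Integrable.mono' (integrable_const 1) hAm.aestronglyMeasurable ?_
      exact Filter.Eventually.of_forall fun ω => by
        simpa [A, Real.norm_eq_abs] using hf1 (θ (s + τ) ω) (H (s + τ) ω)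
    have hIB : Integrable B P := by
      refine Integrable.mono' (integrable_const 1) hBm.aestronglyMeasurable ?_
      exact Filter.Eventually.of_forall fun ω => by
        simpa [B, Real.norm_eq_abs] using hf1 (θ (s + τ) ω) (H s (θ τ ω))
    rw [hI1, hI2, ← integral_sub hIA hIB]
    have hbound : ∀ᵐ ω ∂P, ‖A ω - B ω‖ ≤ C₁ * ε := by
      filter_upwards [hsol 0 s τ hτ] with ω hω
      have hd : dist (H (s + τ) ω) (H s (θ τ ω)) < ε := hω.2
      calc ‖A ω - B ω‖ ≤ C₁ * dist (H (s + τ) ω) (H s (θ τ ω)) := by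
            simpa [A, B, Real.norm_eq_abs] using
              hfl (θ (s + τ) ω) (H (s + τ) ω) (H s (θ τ ω))
        _ ≤ C₁ * ε := by
            exact mul_le_mul_of_nonneg_left hd.le hC₁.le
    calc |∫ ω, (A ω - B ω) ∂P| = ‖∫ ω, (A ω - B ω) ∂P‖ := (Real.norm_eq_abs _).symm
      _ ≤ C₁ * ε * (P Set.univ).toReal := norm_integral_le_of_norm_le_const hbound
      _ = C₁ * ε := by simp
end

section
/- Let Φ : ℝ × Ω × X → X be a measurable random dynamical system over a measurable measure-preserving flow θ on a probability space (Ω, 𝓕, P), on a Polish space (X, d), and let H : ℝ × Ω → X be measurable. Fix t ≥ 0 and s ∈ ℝ, and suppose: (a) for P-almost all ω, Φ(t, θ_s ω)H(s, ω) = H(t+s, ω); (b) there exist independent sub-σ-algebras 𝒢 and ℋ of 𝓕 such that ω ↦ H(s, ω) is 𝒢-measurable and the map (ω, x) ↦ Φ(t, θ_s ω)x is ℋ ⊗ 𝓑(X)-measurable. Define the transition probability P_t(x, B) := P({ω : Φ(t, ω)x ∈ B}) for x ∈ X, B ∈ 𝓑(X), and let λ_u denote the law of H(u, ·) under P. Then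 for every B ∈ 𝓑(X): λ_{t+s}(B) = ∫_X P_t(x, B) dλ_s(x). -/
open MeasureTheory

/-- Auxiliary disintegration lemma: if `j` and `g` are independent measurable maps on a
probability space, then the measure of the preimage of a product-measurable set under
`ω ↦ (j ω, g ω)` disintegrates as an integral over the law of `g`. -/
lemma indep_preimage_lintegral {Ω Ω' X : Type*} [mΩ : MeasurableSpace Ω]
    [mΩ' : MeasurableSpace Ω'] [mX : MeasurableSpace X]
    (P : Measure Ω) [IsProbabilityMeasure P]
    (j : Ω → Ω') (hj : Measurable j) (g : Ω → X) (hg : Measurable g)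
    (hind : ProbabilityTheory.IndepFun j g P)
    (A : Set (Ω' × X)) (hA : MeasurableSet A) :
    P ((fun ω => (j ω, g ω)) ⁻¹' A) = ∫⁻ x, P ((fun ω => (j ω, x)) ⁻¹' A) ∂(P.map g) := by
  haveI : IsProbabilityMeasure (P.map j) := Measure.isProbabilityMeasure_map hj.aemeasurable
  haveI : IsProbabilityMeasure (P.map g) := Measure.isProbabilityMeasure_map hg.aemeasurable
  have hmap := (ProbabilityTheory.indepFun_iff_map_prod_eq_prod_map_map
    hj.aemeasurable hg.aemeasurable).mp hind
  rw [← Measure.map_apply (hj.prodMk hg) hA, hmap, Measure.prod_apply_symm hA]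
  refine lintegral_congr fun x => ?_
  rw [Measure.map_apply hj (measurable_prodMk_right hA)]
  rfl

theorem markov_property_of_laws
    {Ω : Type*} [inst𝓕 : MeasurableSpace Ω] (P : Measure Ω) [IsProbabilityMeasure P]
    (θ : ℝ → Ω → Ω)
    (hθ0 : θ 0 = id)
    (hθadd : ∀ t s : ℝ, θ (t + s) = θ t ∘ θ s)
    (hθmeas : ∀ t : ℝ, Measurable (θ t))
    (hθpres : ∀ t : ℝ, MeasurePreserving (θ t) P P)
    {X : Type*} [MetricSpace X] [PolishSpace X] [instX : MeasurableSpace X] [BorelSpace X]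
    (Φ : ℝ → Ω → X → X)
    (hΦmeas : Measurable fun p : ℝ × Ω × X => Φ p.1 p.2.1 p.2.2)
    (hΦ0 : ∀ ω : Ω, Φ 0 ω = id)
    (hΦcoc : ∀ (t s : ℝ) (ω : Ω) (x : X), Φ (t + s) ω x = Φ t (θ s ω) (Φ s ω x))
    (H : ℝ → Ω → X) (hHmeas : Measurable fun p : ℝ × Ω => H p.1 p.2)
    (t s : ℝ) (ht : 0 ≤ t)
    -- (a) the solution property at times `t`, `s`
    (hsol : ∀ᵐ ω ∂P, Φ t (θ s ω) (H s ω) = H (t + s) ω)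
    -- `λ u` is the law of `H u ·` under `P`
    (lam : ℝ → Measure X)
    (hlam : ∀ u : ℝ, lam u = Measure.map (fun ω => H u ω) P)
    -- (b) independence structure: sub-σ-algebras `𝒢`, `ℋ` of `𝓕`
    (𝒢 ℋ : MeasurableSpace Ω) (h𝒢 : 𝒢 ≤ inst𝓕) (hℋ : ℋ ≤ inst𝓕)
    (hindep : @ProbabilityTheory.Indep Ω 𝒢 ℋ inst𝓕 P)
    (hH𝒢 : @Measurable Ω X 𝒢 instX (fun ω => H s ω))
    (hΦℋ : @Measurable (Ω × X) X (ℋ.prod instX) instX (fun p => Φ t (θ s p.1) p.2)) :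
    ∀ B : Set X, MeasurableSet B →
      lam (t + s) B = ∫⁻ x, P {ω : Ω | Φ t ω x ∈ B} ∂(lam s) := by
  intro B hB
  letI : MeasurableSpace Ω := inst𝓕
  have hHs : Measurable (fun ω => H s ω) := fun u hu => h𝒢 _ (hH𝒢 hu)
  have hid : @Measurable Ω Ω inst𝓕 ℋ id := measurable_id'' hℋ
  -- independence of (id : Ω → (Ω, ℋ)) and H s
  have hindep' : @ProbabilityTheory.IndepFun Ω Ω X inst𝓕 ℋ instX id (fun ω => H s ω) P := by
    refine (ProbabilityTheory.IndepFun_iff_Indep (mβ := ℋ) (mγ := instX)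
      id (fun ω => H s ω) P).mpr ?_
    rw [MeasurableSpace.comap_id]
    exact ProbabilityTheory.indep_of_indep_of_le_right hindep.symm
      (measurable_iff_comap_le.mp hH𝒢)
  set A : Set (Ω × X) := {p | Φ t (θ s p.1) p.2 ∈ B} with hAdef
  have hAmeas : MeasurableSet[ℋ.prod instX] A := hΦℋ hB
  have key := @indep_preimage_lintegral Ω Ω X inst𝓕 ℋ instX P ‹_› id hid
    (fun ω => H s ω) hHs hindep' A hAmeas
  have hHts : Measurable (fun ω => H (t + s) ω) :=
    hHmeas.comp (measurable_const.prodMk measurable_id)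
  have step1 : lam (t + s) B = P ((fun ω => (id ω, H s ω)) ⁻¹' A) := by
    rw [hlam, Measure.map_apply hHts hB]
    apply measure_congr
    rw [Filter.eventuallyEq_set]
    filter_upwards [hsol] with ω hω
    simp [A, hω]
  rw [step1, key, hlam]
  refine lintegral_congr fun x => ?_
  have hC : MeasurableSet {ω : Ω | Φ t ω x ∈ B} :=
    (hΦmeas.comp (measurable_const.prodMk (measurable_id.prodMk measurable_const))) hB
  have hpres := (hθpres s).measure_preimage hC.nullMeasurableSet
  simpa [A, Set.preimage] using hpres
end

section
/- Let Φ : ℝ × Ω × X → X be a measurable random dynamical system over a measurable measure-preserving flow θ on a probability space (Ω, 𝓕, P), on a Polish space (X, d), and let H : ℝ × Ω → X be a random almost periodic solution of Φ. Suppose moreover that for every s ∈ ℝ there exist independent sub-σ-algebras 𝒢_s and ℋ_s of 𝓕 such that ω ↦ H(s, ω) is 𝒢_s-measurable and, for every t ≥ 0, the map (ω, x) ↦ Φ(t, θ_s ω)x is ℋ_s ⊗ 𝓑(X)-measurable. Define P_t(x, B) := P({ω : Φ(t, ω)x ∈ B}) and let λ_u be the law of H(u, ·) under P. Then: (i) for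 every t ≥ 0, s ∈ ℝ and B ∈ 𝓑(X), λ_{t+s}(B) = ∫_X P_t(x, B) dλ_s(x); and (ii) for every C₂ > 0 and every ε > 0 there exists a relatively dense set E ⊆ ℝ such that for every τ ∈ E, every s ∈ ℝ, and every measurable g : X → ℝ with |g| ≤ 1 and |g(x) − g(y)| ≤ C₂·d(x, y) for all x, y, one has |λ_{s+τ}(g) − λ_s(g)| ≤ C₂·ε. -/
open MeasureTheory

theorem almost_periodic_measure_on_phase_space
    {Ω : Type*} [inst𝓕 : MeasurableSpace Ω] (P : Measure Ω) [IsProbabilityMeasure P]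
    (θ : ℝ → Ω → Ω)
    (hθ0 : θ 0 = id)
    (hθadd : ∀ t s : ℝ, θ (t + s) = θ t ∘ θ s)
    (hθmeas : ∀ t : ℝ, Measurable (θ t))
    (hθpres : ∀ t : ℝ, MeasurePreserving (θ t) P P)
    {X : Type*} [MetricSpace X] [PolishSpace X] [instX : MeasurableSpace X] [BorelSpace X]
    (Φ : ℝ → Ω → X → X)
    (hΦmeas : Measurable fun p : ℝ × Ω × X => Φ p.1 p.2.1 p.2.2)
    (hΦ0 : ∀ ω : Ω, Φ 0 ω = id)
    (hΦcoc : ∀ (t s : ℝ) (ω : Ω) (x : X), Φ (t + s) ω x = Φ t (θ s ω) (Φ s ω x))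
    (H : ℝ → Ω → X) (hHmeas : Measurable fun p : ℝ × Ω => H p.1 p.2)
    (hHap : IsRandomAlmostPeriodicSolution P θ Φ H)
    -- `λ u` is the law of `H u ·` under `P`
    (lam : ℝ → Measure X)
    (hlam : ∀ u : ℝ, lam u = Measure.map (fun ω => H u ω) P)
    -- Markovian independence structure
    (hMarkov : ∀ s : ℝ, ∃ 𝒢 ℋ : MeasurableSpace Ω, 𝒢 ≤ inst𝓕 ∧ ℋ ≤ inst𝓕 ∧
      @ProbabilityTheory.Indep Ω 𝒢 ℋ inst𝓕 P ∧
      @Measurable Ω X 𝒢 instX (fun ω => H s ω) ∧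
      ∀ t : ℝ, 0 ≤ t → @Measurable (Ω × X) X (ℋ.prod instX) instX
        (fun p => Φ t (θ s p.1) p.2)) :
    -- (i) the laws form an entrance measure for the transition probabilities
    (∀ t : ℝ, 0 ≤ t → ∀ s : ℝ, ∀ B : Set X, MeasurableSet B →
      lam (t + s) B = ∫⁻ x, P {ω : Ω | Φ t ω x ∈ B} ∂(lam s)) ∧
    -- (ii) almost periodicity of the laws
    (∀ C₂ > (0 : ℝ), ∀ ε > (0 : ℝ), ∃ E : Set ℝ, RelativelyDense E ∧
      ∀ τ ∈ E, ∀ s : ℝ, ∀ g : X → ℝ, Measurable g →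
        (∀ x : X, |g x| ≤ 1) →
        (∀ x y : X, |g x - g y| ≤ C₂ * dist x y) →
        |(∫ x, g x ∂(lam (s + τ))) - ∫ x, g x ∂(lam s)| ≤ C₂ * ε) := by
  constructor
  · -- Part (i)
    intro t ht s B hB
    obtain ⟨𝒢, ℋ, h𝒢, hℋ, hIndep, hH𝒢, hΦℋ⟩ := hMarkov s
    obtain ⟨E, ⟨l, hl, hal⟩, hspec⟩ := hHap 1 one_pos
    obtain ⟨τ, hτE, -⟩ := hal 0
    have hHs : @Measurable Ω X inst𝓕 instX (fun ω => H s ω) := hH𝒢.mono h𝒢 le_rfl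
    have hHts : @Measurable Ω X inst𝓕 instX (fun ω => H (t + s) ω) := by
      have hpair : @Measurable Ω (ℝ × Ω) inst𝓕 (@Prod.instMeasurableSpace ℝ Ω _ inst𝓕)
          (fun ω => ((t + s : ℝ), ω)) := Measurable.prodMk measurable_const measurable_id
      exact hHmeas.comp hpair
    have hae : ∀ᵐ ω ∂P, Φ t (θ s ω) (H s ω) = H (t + s) ω :=
      (hspec t s τ hτE).mono fun ω h => h.1
    haveI : IsProbabilityMeasure (lam s) := by
      have hae' : AEMeasurable (fun ω => H s ω) P := hHs.aemeasurable
      rw [hlam s]; exact Measure.isProbabilityMeasure_map hae'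
    -- the trimmed measure
    set Pℋ : @Measure Ω ℋ := P.trim hℋ with hPℋ
    haveI : IsProbabilityMeasure Pℋ :=
      ⟨by rw [hPℋ, trim_measurableSet_eq hℋ (@MeasurableSet.univ Ω ℋ), measure_univ]⟩
    -- the product σ-algebra ℋ ⊗ 𝓑(X) and the pair map
    have hF : @Measurable (Ω × X) X (ℋ.prod instX) instX (fun p => Φ t (θ s p.1) p.2) :=
      hΦℋ t ht
    have hidℋ : @Measurable Ω Ω inst𝓕 ℋ id := (@measurable_id Ω ℋ).mono hℋ le_rfl
    have hψ : @Measurable Ω (Ω × X) inst𝓕 (ℋ.prod instX) (fun ω => (ω, H s ω)) :=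
      Measurable.prodMk hidℋ hHs
    -- the law of the pair map is the product measure
    have hprod : @Measure.map Ω (Ω × X) inst𝓕 (ℋ.prod instX) (fun ω => (ω, H s ω)) P
        = @Measure.prod Ω X ℋ instX Pℋ (lam s) := by
      refine (Measure.prod_eq fun u v hu hv => ?_).symm
      rw [Measure.map_apply hψ (@MeasurableSet.prod Ω X ℋ instX _ _ hu hv)]
      have hpre : (fun ω => (ω, H s ω)) ⁻¹' (u ×ˢ v)
          = ((fun ω => H s ω) ⁻¹' v) ∩ u := by
        ext ω; simp [Set.mem_prod, and_comm]
      rw [hpre, (ProbabilityTheory.Indep_iff 𝒢 ℋ P).mp hIndep _ _ (hH𝒢 hv) hu,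
        hPℋ, trim_measurableSet_eq hℋ hu, hlam s,
        Measure.map_apply hHs hv, mul_comm]
    -- rewrite the left-hand side
    have h1 : lam (t + s) B = P {ω | Φ t (θ s ω) (H s ω) ∈ B} := by
      rw [hlam, Measure.map_apply hHts hB]
      refine measure_congr ?_
      filter_upwards [hae] with ω hω
      have h' : (H (t + s) ω ∈ B) = (Φ t (θ s ω) (H s ω) ∈ B) := by rw [hω]
      exact h'
    have hFB : @MeasurableSet (Ω × X) (ℋ.prod instX) ((fun p => Φ t (θ s p.1) p.2) ⁻¹' B) :=
      hF hB
    have h2 : P {ω | Φ t (θ s ω) (H s ω) ∈ B}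
        = @Measure.map Ω (Ω × X) inst𝓕 (ℋ.prod instX) (fun ω => (ω, H s ω)) P
          ((fun p : Ω × X => Φ t (θ s p.1) p.2) ⁻¹' B) := by
      rw [Measure.map_apply hψ hFB]
      rfl
    rw [h1, h2, hprod, @Measure.prod_apply_symm Ω X ℋ instX Pℋ (lam s) _ _ _ hFB]
    refine lintegral_congr fun x => ?_
    have hset : ((fun ω => (ω, x)) ⁻¹' ((fun p : Ω × X => Φ t (θ s p.1) p.2) ⁻¹' B))
        = θ s ⁻¹' {ω : Ω | Φ t ω x ∈ B} := rfl
    have hmem : @MeasurableSet Ω ℋ ((fun ω => (ω, x)) ⁻¹'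
        ((fun p : Ω × X => Φ t (θ s p.1) p.2) ⁻¹' B)) := by
      have hc : @Measurable Ω (Ω × X) ℋ (ℋ.prod instX) (fun ω => (ω, x)) :=
        Measurable.prodMk (@measurable_id Ω ℋ) (@measurable_const X Ω instX ℋ x)
      exact (hF.comp hc) hB
    have hΦx : @Measurable Ω X inst𝓕 instX (fun ω => Φ t ω x) := by
      have h1' : @Measurable Ω (Ω × X) inst𝓕 (@Prod.instMeasurableSpace Ω X inst𝓕 instX)
          (fun ω : Ω => (ω, x)) := Measurable.prodMk measurable_id measurable_const
      have hpair : @Measurable Ω (ℝ × Ω × X) inst𝓕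
          (@Prod.instMeasurableSpace ℝ (Ω × X) _ (@Prod.instMeasurableSpace Ω X inst𝓕 instX))
          (fun ω : Ω => ((t, ω, x) : ℝ × Ω × X)) :=
        Measurable.prodMk measurable_const h1'
      exact hΦmeas.comp hpair
    have hnull : @MeasureTheory.NullMeasurableSet Ω inst𝓕 {ω : Ω | Φ t ω x ∈ B} P :=
      (hΦx hB).nullMeasurableSet
    rw [hPℋ]
    rw [@trim_measurableSet_eq Ω ℋ inst𝓕 P _ hℋ hmem]
    rw [hset]
    rw [@MeasurePreserving.measure_preimage Ω Ω inst𝓕 inst𝓕 P P (θ s) (hθpres s) _ hnull]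
  · -- Part (ii)
    intro C₂ hC₂ ε hε
    obtain ⟨E, hE, hspec⟩ := hHap ε hε
    refine ⟨E, hE, fun τ hτ s g hg hg1 hgL => ?_⟩
    have hHu : ∀ u : ℝ, Measurable (fun ω => H u ω) := fun u =>
      hHmeas.comp (measurable_const.prodMk measurable_id)
    haveI : IsProbabilityMeasure (lam (s + τ)) := by
      rw [hlam]; exact Measure.isProbabilityMeasure_map (hHu _).aemeasurable
    have h1 : (∫ x, g x ∂(lam (s + τ))) = ∫ ω, g (H (s + τ) ω) ∂P := by
      rw [hlam, integral_map (hHu _).aemeasurable hg.aestronglyMeasurable]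
    have h2 : (∫ x, g x ∂(lam s)) = ∫ ω, g (H s (θ τ ω)) ∂P := by
      rw [hlam, integral_map (hHu _).aemeasurable hg.aestronglyMeasurable]
      have hsm : AEStronglyMeasurable (fun ω => g (H s ω)) (Measure.map (θ τ) P) := by
        rw [(hθpres τ).map_eq]; exact (hg.comp (hHu s)).aestronglyMeasurable
      conv_lhs => rw [← (hθpres τ).map_eq]
      rw [integral_map (hθmeas τ).aemeasurable hsm]
    have hint1 : Integrable (fun ω => g (H (s + τ) ω)) P :=
      (integrable_const (1 : ℝ)).mono' ((hg.comp (hHu _)).aestronglyMeasurable)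
        (Filter.Eventually.of_forall fun ω => by
          simpa [Real.norm_eq_abs] using hg1 (H (s + τ) ω))
    have hint2 : Integrable (fun ω => g (H s (θ τ ω))) P :=
      (integrable_const (1 : ℝ)).mono' (((hg.comp (hHu s)).comp (hθmeas τ)).aestronglyMeasurable)
        (Filter.Eventually.of_forall fun ω => by
          simpa [Real.norm_eq_abs] using hg1 (H s (θ τ ω)))
    rw [h1, h2, ← integral_sub hint1 hint2]
    have hbound : ∀ᵐ ω ∂P, ‖g (H (s + τ) ω) - g (H s (θ τ ω))‖ ≤ C₂ * ε := by
      filter_upwards [hspec 0 s τ hτ] with ω hω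
      calc ‖g (H (s + τ) ω) - g (H s (θ τ ω))‖
          ≤ C₂ * dist (H (s + τ) ω) (H s (θ τ ω)) := hgL _ _
        _ ≤ C₂ * ε := by
            exact mul_le_mul_of_nonneg_left hω.2.le hC₂.le
    calc |∫ ω, (g (H (s + τ) ω) - g (H s (θ τ ω))) ∂P|
        ≤ ∫ ω, ‖g (H (s + τ) ω) - g (H s (θ τ ω))‖ ∂P :=
          by rw [← Real.norm_eq_abs]; exact norm_integral_le_integral_norm _
      _ ≤ ∫ (_ : Ω), C₂ * ε ∂P :=
          integral_mono_ae (hint1.sub hint2).norm (integrable_const _) hbound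
      _ = C₂ * ε := by simp
end

section
/- Let γ be an irrational real number. For every ε > 0, the set E = {τ ∈ ℝ : sqrt(dist(τ, ℤ)² + dist(γτ, ℤ)²) < ε} is relatively dense in ℝ, where dist(x, ℤ) denotes the distance from x to the nearest integer. -/
/-- The distance from a real number to the nearest integer. -/
noncomputable def distToInt (x : ℝ) : ℝ := |x - round x|

theorem relativelyDense_of_forall_int_exists_abs_sub_le {E : Set ℝ} {R : ℝ}
    (h : ∀ m : ℤ, ∃ τ ∈ E, |τ - m| ≤ R) : RelativelyDense E := by
  have hR : 0 ≤ R := by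
    obtain ⟨τ, -, hτ⟩ := h 0
    exact (abs_nonneg _).trans hτ
  refine ⟨2 * R + 1, by positivity, fun a => ?_⟩
  obtain ⟨τ, hτE, hτ⟩ := h ⌈a + R⌉
  have hm_ge : a + R ≤ ⌈a + R⌉ := Int.le_ceil _
  have hm_lt : (⌈a + R⌉ : ℝ) < a + R + 1 := Int.ceil_lt_add_one _
  obtain ⟨hτ_ge, hτ_le⟩ := abs_sub_le_iff.mp hτ
  exact ⟨τ, hτE, by linarith, by linarith⟩

theorem Irrational.exists_int_mul_add_int_mem_Ioo {γ : ℝ} (hγ : Irrational γ) {ε : ℝ}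
    (hε : 0 < ε) : ∃ q p : ℤ, 0 < q * γ + p ∧ q * γ + p < ε := by
  have hdense : Dense (AddSubgroup.closure {γ, 1} : Set ℝ) :=
    dense_addSubgroupClosure_pair_iff.mpr (by simpa using hγ)
  obtain ⟨β, hβ, hβ_pos, hβ_lt⟩ := hdense.exists_between hε
  obtain ⟨q, p, rfl⟩ := AddSubgroup.mem_closure_pair.mp hβ
  exact ⟨q, p, by simpa using hβ_pos, by simpa using hβ_lt⟩

namespace distToInt

theorem nonneg (x : ℝ) : 0 ≤ distToInt x := abs_nonneg _

theorem le_abs_sub_intCast (x : ℝ) (z : ℤ) : distToInt x ≤ |x - z| := round_le x z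

@[simp]
theorem intCast (n : ℤ) : distToInt n = 0 := by
  simp [distToInt]

@[simp]
theorem add_intCast (x : ℝ) (n : ℤ) : distToInt (x + n) = distToInt x := by
  simp only [distToInt, round_add_intCast, Int.cast_add, add_sub_add_right_eq_sub]

/-- The first step of size `β` past `⌊x⌋ + 1` overshoots it by less than `β`. -/
theorem exists_nat_mul_le_one_and_add_nat_mul_le (x : ℝ) {β : ℝ} (hβ : 0 < β) :
    ∃ K : ℕ, K * β ≤ 1 ∧ distToInt (x + K * β) ≤ β := by
  set t := 1 - Int.fract x
  have ht : t ≤ 1 := by linarith [Int.fract_nonneg x]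
  have ht_pos : 0 < t := by linarith [Int.fract_lt_one x]
  refine ⟨⌊t / β⌋₊, ?_, ?_⟩
  · calc (⌊t / β⌋₊ : ℝ) * β ≤ t / β * β := by gcongr; exact Nat.floor_le (by positivity)
      _ = t := div_mul_cancel₀ t hβ.ne'
      _ ≤ 1 := ht
  · have h_le : (⌊t / β⌋₊ : ℝ) * β ≤ t :=
      (le_div_iff₀ hβ).mp (Nat.floor_le (by positivity))
    have h_gt : t - β < (⌊t / β⌋₊ : ℝ) * β := by
      have := (div_lt_iff₀ hβ).mp (Nat.lt_floor_add_one (t / β))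
      linarith
    have h_eq : x + ⌊t / β⌋₊ * β - (⌊x⌋ + 1 : ℤ) = ⌊t / β⌋₊ * β - t := by
      push_cast [t, Int.fract]
      ring
    calc distToInt (x + ⌊t / β⌋₊ * β) ≤ |x + ⌊t / β⌋₊ * β - (⌊x⌋ + 1 : ℤ)| :=
          le_abs_sub_intCast _ _
      _ ≤ β := by rw [h_eq, abs_le]; constructor <;> linarith

end distToInt

theorem kronecker_relatively_dense (γ : ℝ) (hγ : Irrational γ) (ε : ℝ) (hε : 0 < ε) :
    RelativelyDense
      {τ : ℝ | Real.sqrt (distToInt τ ^ 2 + distToInt (γ * τ) ^ 2) < ε} := by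
  obtain ⟨q, p, hβ, hβε⟩ := hγ.exists_int_mul_add_int_mem_Ioo hε
  set β := q * γ + p
  apply relativelyDense_of_forall_int_exists_abs_sub_le (R := |(q : ℝ)| / β)
  intro m
  obtain ⟨K, hKβ, hK⟩ := distToInt.exists_nat_mul_le_one_and_add_nat_mul_le (γ * m) hβ
  refine ⟨(m + K * q : ℤ), ?_, ?_⟩
  · have h_shift : γ * (m + K * q : ℤ) = γ * m + K * β + (-(K * p) : ℤ) := by
      push_cast [β]
      ring
    simp only [Set.mem_ofPred_eq, distToInt.intCast, h_shift, distToInt.add_intCast]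
    rw [sq, zero_mul, zero_add, Real.sqrt_sq (distToInt.nonneg _)]
    exact hK.trans_lt hβε
  · have hK_le : (K : ℝ) ≤ 1 / β := (le_div_iff₀ hβ).mpr hKβ
    calc |((m + K * q : ℤ) : ℝ) - m| = K * |(q : ℝ)| := by push_cast; simp [abs_mul]
      _ ≤ 1 / β * |(q : ℝ)| := by gcongr
      _ = |(q : ℝ)| / β := one_div_mul_eq_div _ _
end

section
/- Let b : ℝ → ℝ be continuous with b(0) = 0, and suppose that ∫_{-∞}^0 e^{2s + 2b(s+u)} ds < ∞ for every u ∈ ℝ (the improper Lebesgue integral converges). Then for every t ∈ ℝ: e^{t + b(t)} · (2∫_{-∞}^t e^{2s + 2b(s)} ds)^{-1/2} = (2∫_{-∞}^0 e^{2s + 2(b(s+t) − b(t))} ds)^{-1/2}. Equivalently, writing r(u) := (2∫_{-∞}^0 e^{2s + 2(b(s+u) − b(u))} ds)^{-1/2}, one has r(t) = r(0)·e^{t + b(t)} / (1 + 2 r(0)² ∫_0^t e^{2s + 2b(s)} ds)^{1/2}, i.e. the stationary point r(ω) = (2∫_{-∞}^0 e^{2s+2B_s(ω)} ds)^{-1/2}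 satisfies Φ(t, ω)r(ω) = r(θ_t ω) pathwise for the cocycle Φ(t,ω)x = x e^{t + b(t)} (1 + 2x²∫_0^t e^{2s+2b(s)} ds)^{-1/2} generated by the SDE dX_t = (3/2·X_t − X_t³)dt + X_t dB_t. -/
open MeasureTheory Real

private lemma shift_Iic (f : ℝ → ℝ) (t : ℝ) :
    ∫ s in Set.Iic (0:ℝ), f (s + t) = ∫ s in Set.Iic t, f s := by
  have h := (measurePreserving_add_right (volume : Measure ℝ) t).setIntegral_preimage_emb
    (measurableEmbedding_addRight t) f (Set.Iic t)
  have hp : (fun x => x + t) ⁻¹' Set.Iic t = Set.Iic (0:ℝ) := by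
    ext x; simp [Set.mem_Iic]
  rw [hp] at h
  exact h

private lemma intOn_shift {f : ℝ → ℝ} {t : ℝ}
    (h : IntegrableOn (fun s => f (s + t)) (Set.Iic (0:ℝ))) :
    IntegrableOn f (Set.Iic t) := by
  have hiff := (measurePreserving_add_right (volume : Measure ℝ) t).integrableOn_comp_preimage
    (measurableEmbedding_addRight t) (f := f) (s := Set.Iic t)
  have hp : (fun x => x + t) ⁻¹' Set.Iic t = Set.Iic (0:ℝ) := by
    ext x; simp [Set.mem_Iic]
  rw [hp] at hiff
  exact hiff.mp h

theorem stationary_point_cocycle_identity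
    (b : ℝ → ℝ) (hb : Continuous b) (hb0 : b 0 = 0)
    (hint : ∀ u : ℝ, IntegrableOn (fun s => Real.exp (2 * s + 2 * b (s + u))) (Set.Iic 0))
    -- `r u = (2∫_{-∞}^0 e^{2s + 2(b(s+u) − b(u))} ds)^{-1/2}`
    (r : ℝ → ℝ)
    (hr : ∀ u : ℝ,
      r u = 1 / Real.sqrt (2 * ∫ s in Set.Iic (0:ℝ), Real.exp (2 * s + 2 * (b (s + u) - b u)))) :
    ∀ t : ℝ,
      Real.exp (t + b t) *
          (1 / Real.sqrt (2 * ∫ s in Set.Iic t, Real.exp (2 * s + 2 * b s))) =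
        1 / Real.sqrt (2 * ∫ s in Set.Iic (0:ℝ), Real.exp (2 * s + 2 * (b (s + t) - b t))) ∧
      r t = r 0 * Real.exp (t + b t) /
          Real.sqrt (1 + 2 * (r 0) ^ 2 * ∫ s in (0:ℝ)..t, Real.exp (2 * s + 2 * b s)) := by
  set f : ℝ → ℝ := fun s => Real.exp (2 * s + 2 * b s) with hf
  set I : ℝ → ℝ := fun t => ∫ s in Set.Iic t, f s with hIdef
  -- integrability
  have hIntOn : ∀ t : ℝ, IntegrableOn f (Set.Iic t) := by
    intro t
    apply intOn_shift
    have h : IntegrableOn (fun s => Real.exp (2 * t) * Real.exp (2 * s + 2 * b (s + t)))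
        (Set.Iic (0:ℝ)) := (hint t).const_mul (Real.exp (2 * t))
    refine h.congr_fun (fun s _ => ?_) measurableSet_Iic
    simp only [hf, ← Real.exp_add]
    ring_nf
  -- positivity of I
  have hIpos : ∀ t : ℝ, 0 < I t := by
    intro t
    rw [hIdef]
    rw [setIntegral_pos_iff_support_of_nonneg_ae ?_ (hIntOn t)]
    · have : Function.support f = Set.univ := by
        ext x; simp [hf, Real.exp_ne_zero]
      rw [this, Set.univ_inter]
      simp [Real.volume_Iic]
    · filter_upwards with x using (Real.exp_pos _).le
  -- change of variables
  have key : ∀ t : ℝ,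
      (∫ s in Set.Iic (0:ℝ), Real.exp (2 * s + 2 * (b (s + t) - b t)))
        = Real.exp (-(2 * (t + b t))) * I t := by
    intro t
    have h1 : ∀ s : ℝ, Real.exp (2 * s + 2 * (b (s + t) - b t))
        = Real.exp (-(2 * (t + b t))) * f (s + t) := by
      intro s
      rw [hf]; rw [← Real.exp_add]; ring_nf
    simp_rw [h1]
    rw [integral_const_mul, shift_Iic f t]
  -- first identity
  have first : ∀ t : ℝ,
      Real.exp (t + b t) * (1 / Real.sqrt (2 * I t))
        = 1 / Real.sqrt (2 * ∫ s in Set.Iic (0:ℝ), Real.exp (2 * s + 2 * (b (s + t) - b t))) := by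
    intro t
    rw [key t]
    have h2 : 2 * (Real.exp (-(2 * (t + b t))) * I t)
        = (Real.exp (-(t + b t))) ^ 2 * (2 * I t) := by
      rw [sq, ← Real.exp_add]; ring_nf
    rw [h2, Real.sqrt_mul (sq_nonneg _), Real.sqrt_sq (Real.exp_pos _).le]
    rw [Real.exp_neg]
    field_simp
  refine fun t => ⟨first t, ?_⟩
  -- evaluate r 0 and r t
  have hr0 : r 0 = 1 / Real.sqrt (2 * I 0) := by
    have h0 : (∫ s in Set.Iic (0:ℝ), Real.exp (2 * s + 2 * (b (s + 0) - b 0))) = I 0 := by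
      refine setIntegral_congr_fun measurableSet_Iic (fun s _ => ?_)
      simp [hf, hb0]
    rw [hr 0, h0]
  have hrt : r t = Real.exp (t + b t) * (1 / Real.sqrt (2 * I t)) := by
    rw [hr t, ← first t]
  have hsub : I t - I 0 = ∫ s in (0:ℝ)..t, f s :=
    intervalIntegral.integral_Iic_sub_Iic (hIntOn 0) (hIntOn t)
  have hJ : (∫ s in (0:ℝ)..t, Real.exp (2 * s + 2 * b s)) = I t - I 0 := hsub.symm
  rw [hrt, hr0, hJ]
  have hI0 := hIpos 0
  have hIt := hIpos t
  have hs2 : (0:ℝ) < Real.sqrt 2 := Real.sqrt_pos.mpr (by norm_num)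
  have hsI0 : (0:ℝ) < Real.sqrt (I 0) := Real.sqrt_pos.mpr hI0
  have hsIt : (0:ℝ) < Real.sqrt (I t) := Real.sqrt_pos.mpr hIt
  have hsq : (1 / Real.sqrt (2 * I 0)) ^ 2 = 1 / (2 * I 0) := by
    rw [div_pow, one_pow, Real.sq_sqrt (by positivity)]
  have hX : 1 + 2 * (1 / Real.sqrt (2 * I 0)) ^ 2 * (I t - I 0) = I t / I 0 := by
    rw [hsq]; field_simp; ring
  rw [hX]
  rw [Real.sqrt_mul (by norm_num : (0:ℝ) ≤ 2) (I t),
      Real.sqrt_mul (by norm_num : (0:ℝ) ≤ 2) (I 0),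
      Real.sqrt_div hIt.le]
  field_simp
end
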